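/- arXiv:1210.2182 — 7 statements merged into one kernel-verified Lean document; each statement's English description precedes it below -/
import Mathlib

section
/- Let φ be uniformly distributed over [0,2π). For every real x with |x| ≤ 1, the expectation E[log₂(1 − x·cos φ)] equals log₂(1 + √(1 − x²)) − 1; equivalently, (1/(2π))·∫₀^{2π} log₂(1 − x·cos φ) dφ = log₂(1 + √(1 − x²)) − 1. -/
/-!
Write `1 - x cos φ = ‖R e^{iφ} - a‖²` with real `R, a` such that `R² + a² = 1`, `2Ra = x` and
`|a| ≤ |R|`; this forces `R² = (1 + √(1 - x²))/2`. Since `a` lies in the closed disc of radius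
`|R|`, the mean value of `log ‖z - a‖` over the circle `|z| = |R|` is `log |R|` (Jensen's formula),
so the mean of `log (1 - x cos φ)` is `log R² = log (1 + √(1 - x²)) - log 2`.
-/

open Real

lemma norm_circleMap_zero_sub_ofReal_sq (R a θ : ℝ) :
    ‖circleMap 0 R θ - a‖ ^ 2 = R ^ 2 - 2 * R * a * cos θ + a ^ 2 := by
  rw [Complex.sq_norm, Complex.normSq_apply]
  simp only [circleMap, zero_add, Complex.sub_re, Complex.sub_im, Complex.mul_re, Complex.mul_im,
    Complex.ofReal_re, Complex.ofReal_im, Complex.exp_ofReal_mul_I_re,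
    Complex.exp_ofReal_mul_I_im]
  linear_combination R ^ 2 * sin_sq_add_cos_sq θ

lemma integral_log_sq_sub_two_mul_mul_cos_add_sq {R a : ℝ} (h : |a| ≤ |R|) :
    ∫ θ in 0..2 * π, log (R ^ 2 - 2 * R * a * cos θ + a ^ 2) = 4 * π * log R := by
  have hball : (a : ℂ) ∈ Metric.closedBall 0 |R| := by simpa using h
  have havg := circleAverage_log_norm_sub_const_of_mem_closedBall hball
  rw [circleAverage_def, smul_eq_mul, inv_mul_eq_iff_eq_mul₀ (by positivity)] at havg
  calc ∫ θ in 0..2 * π, log (R ^ 2 - 2 * R * a * cos θ + a ^ 2)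
      = ∫ θ in 0..2 * π, 2 * log ‖circleMap 0 R θ - a‖ := by
        simp_rw [← norm_circleMap_zero_sub_ofReal_sq, log_pow, Nat.cast_ofNat]
    _ = 4 * π * log R := by
        rw [intervalIntegral.integral_const_mul, havg]; ring

lemma exists_sq_add_sq_eq_one_of_abs_le_one {x : ℝ} (hx : |x| ≤ 1) :
    ∃ R a : ℝ, R ^ 2 + a ^ 2 = 1 ∧ 2 * R * a = x ∧ |a| ≤ |R| ∧
      R ^ 2 = (1 + √(1 - x ^ 2)) / 2 := by
  set s := √(1 - x ^ 2)
  have hs : 0 ≤ s := sqrt_nonneg _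
  have hss : s ^ 2 = 1 - x ^ 2 := sq_sqrt (by nlinarith [sq_abs x, abs_nonneg x])
  set R := √((1 + s) / 2)
  have hR2 : R ^ 2 = (1 + s) / 2 := sq_sqrt (by positivity)
  have hR : 0 < R := sqrt_pos.2 (by positivity)
  have ha2 : (x / (2 * R)) ^ 2 = (1 - s) / 2 := by
    rw [div_pow, mul_pow, hR2, div_eq_iff (by positivity)]
    linear_combination hss
  refine ⟨R, x / (2 * R), by rw [hR2, ha2]; ring, by field_simp, ?_, hR2⟩
  exact sq_le_sq.1 (by rw [ha2, hR2]; linarith)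

lemma integral_log_one_sub_mul_cos {x : ℝ} (hx : |x| ≤ 1) :
    ∫ θ in 0..2 * π, log (1 - x * cos θ) = 2 * π * log ((1 + √(1 - x ^ 2)) / 2) := by
  obtain ⟨R, a, hsum, hprod, hle, hR2⟩ := exists_sq_add_sq_eq_one_of_abs_le_one hx
  have hintegrand (θ : ℝ) : 1 - x * cos θ = R ^ 2 - 2 * R * a * cos θ + a ^ 2 := by
    rw [← hprod]
    linear_combination -hsum
  simp_rw [hintegrand, integral_log_sq_sub_two_mul_mul_cos_add_sq hle, ← hR2, log_pow]
  push_cast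
  ring

/-- For `φ` uniform on `[0, 2π)` and `|x| ≤ 1`,
`E[log₂(1 − x cos φ)] = log₂(1 + √(1 − x²)) − 1`. -/
theorem uniform_phase_log_integral (x : ℝ) (hx : |x| ≤ 1) :
    (1 / (2 * π)) * (∫ φ in (0:ℝ)..(2 * π), Real.logb 2 (1 - x * Real.cos φ)) =
      Real.logb 2 (1 + Real.sqrt (1 - x ^ 2)) - 1 := by
  have hs : 0 < 1 + √(1 - x ^ 2) := by positivity
  simp_rw [logb, intervalIntegral.integral_div, integral_log_one_sub_mul_cos hx,
    log_div hs.ne' two_ne_zero]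
  field_simp
end

section
/- Let (X_i)_{i≥1} be a sequence of independent and identically distributed nonnegative real random variables with E[X₁²] < ∞, and let S_m = X₁ + ⋯ + X_m. Then for every ε ∈ (0, E[X₁]), every c > 0, and every m ≥ 1, E[log₂(1 + c·S_m²)] ≥ log₂(1 + c·m²·(E[X₁])²) − δ_m, where δ_m = (E[X₁²]/(m·ε²))·log₂(1 + c·m²·(E[X₁] − ε)²) − log₂(1 − c·m²·ε·(2·E[X₁] − ε)/(1 + c·m²·(E[X₁])²)). -/
open MeasureTheory ProbabilityTheory Real

/-!
By Chebyshev's inequality, `S_m ≥ m (E X₁ - ε)` with probability at least `1 - E[X₁²]/(m ε²)`,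
because `Var S_m = m Var X₁ ≤ m E[X₁²]`. On that event the nonnegative integrand
`log₂(1 + c S_m²)` is at least `L = log₂(1 + c m² (E X₁ - ε)²)`, so the expectation is at least
`(1 - E[X₁²]/(m ε²)) L`, which is the right-hand side once `L` is split as
`log₂(1 + c m² (E X₁)²) + log₂(1 - c m² ε (2 E X₁ - ε)/(1 + c m² (E X₁)²))`.
-/

lemma Real.logb_one_add_mul_sq_add_logb_one_sub (b K x ε : ℝ) (hK : 0 ≤ K) :
    logb b (1 + K * x ^ 2) + logb b (1 - K * ε * (2 * x - ε) / (1 + K * x ^ 2)) =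
      logb b (1 + K * (x - ε) ^ 2) := by
  have hD : 0 < 1 + K * x ^ 2 := by positivity
  have hN : 0 < 1 + K * (x - ε) ^ 2 := by positivity
  have hq : 1 - K * ε * (2 * x - ε) / (1 + K * x ^ 2) =
      (1 + K * (x - ε) ^ 2) / (1 + K * x ^ 2) := by
    field_simp
    ring
  rw [hq, logb_div hN.ne' hD.ne']
  ring

lemma MeasureTheory.MemLp.integrable_log_one_add_mul_sq {Ω : Type*} [MeasurableSpace Ω]
    {μ : Measure Ω} {Y : Ω → ℝ} (hY : MemLp Y 2 μ) {c : ℝ} (hc : 0 ≤ c) :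
    Integrable (fun ω => log (1 + c * Y ω ^ 2)) μ := by
  refine (hY.integrable_sq.const_mul c).mono
    (measurable_log.comp_aemeasurable
      (((hY.1.aemeasurable.pow_const 2).const_mul c).const_add 1)).aestronglyMeasurable
    (ae_of_all _ fun ω => ?_)
  have hpos : 0 < 1 + c * Y ω ^ 2 := by positivity
  rw [norm_of_nonneg (log_nonneg (le_add_of_nonneg_right (by positivity))),
    norm_of_nonneg (by positivity)]
  linarith [log_le_sub_one_of_pos hpos]

namespace ProbabilityTheory

variable {Ω : Type*} [MeasurableSpace Ω] {μ : Measure Ω}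

lemma one_sub_variance_div_sq_le_measureReal_sub_le [IsProbabilityMeasure μ] {Y : Ω → ℝ}
    (hY : MemLp Y 2 μ) {t : ℝ} (ht : 0 < t) :
    1 - variance Y μ / t ^ 2 ≤ μ.real {ω | μ[Y] - t ≤ Y ω} := by
  set A := {ω | μ[Y] - t ≤ Y ω}
  have hcompl : Aᶜ ⊆ {ω | t ≤ |Y ω - μ[Y]|} := fun ω hω => by
    simp only [A, Set.mem_compl_iff, Set.mem_ofPred_eq, not_le] at hω ⊢
    rw [abs_sub_comm]
    exact (le_abs_self _).trans' (by linarith)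
  have hcheb : μ.real Aᶜ ≤ variance Y μ / t ^ 2 :=
    (measureReal_mono hcompl).trans <| ENNReal.toReal_le_of_le_ofReal
      (div_nonneg (variance_nonneg _ _) (sq_nonneg _)) (meas_ge_le_variance_div_sq hY ht)
  have hunion : 1 ≤ μ.real A + μ.real Aᶜ := by
    simpa [Set.union_compl_self] using measureReal_union_le (μ := μ) A Aᶜ
  linarith

lemma one_sub_variance_div_sq_mul_logb_le_integral [IsProbabilityMeasure μ] {Y : Ω → ℝ}
    (hY : MemLp Y 2 μ) {b c t : ℝ} (hb : 1 < b) (hc : 0 ≤ c) (ht : 0 < t) (htY : t ≤ μ[Y]) :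
    (1 - variance Y μ / t ^ 2) * logb b (1 + c * (μ[Y] - t) ^ 2) ≤
      ∫ ω, logb b (1 + c * Y ω ^ 2) ∂μ := by
  set L := logb b (1 + c * (μ[Y] - t) ^ 2)
  have hlogb_nonneg : ∀ y, 0 ≤ logb b (1 + c * y ^ 2) := fun y =>
    logb_nonneg hb (le_add_of_nonneg_right (by positivity))
  have hsub : {ω | μ[Y] - t ≤ Y ω} ⊆ {ω | L ≤ logb b (1 + c * Y ω ^ 2)} :=
    fun ω (hω : μ[Y] - t ≤ Y ω) => logb_le_logb_of_le hb (by positivity) (by gcongr)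
  have hint : Integrable (fun ω => logb b (1 + c * Y ω ^ 2)) μ :=
    (hY.integrable_log_one_add_mul_sq hc).div_const _
  calc (1 - variance Y μ / t ^ 2) * L ≤ L * μ.real {ω | μ[Y] - t ≤ Y ω} := by
        rw [mul_comm]
        exact mul_le_mul_of_nonneg_left (one_sub_variance_div_sq_le_measureReal_sub_le hY ht)
          (hlogb_nonneg _)
    _ ≤ L * μ.real {ω | L ≤ logb b (1 + c * Y ω ^ 2)} :=
        mul_le_mul_of_nonneg_left (measureReal_mono hsub) (hlogb_nonneg _)
    _ ≤ ∫ ω, logb b (1 + c * Y ω ^ 2) ∂μ :=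
        mul_meas_ge_le_integral_of_nonneg (ae_of_all _ fun ω => hlogb_nonneg _) hint L

lemma integral_sum_range_of_identDistrib {X : ℕ → Ω → ℝ} (hX : Integrable (X 0) μ)
    (hident : ∀ i, IdentDistrib (X i) (X 0) μ μ) (n : ℕ) :
    μ[∑ i ∈ Finset.range n, X i] = (n : ℝ) * μ[X 0] := by
  simp only [Finset.sum_apply]
  rw [integral_finsetSum _ fun i _ => (hident i).integrable_iff.2 hX]
  simp [(hident _).integral_eq]

lemma variance_sum_range_of_identDistrib {X : ℕ → Ω → ℝ} (hX : MemLp (X 0) 2 μ)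
    (hindep : Pairwise fun i j => X i ⟂ᵢ[μ] X j) (hident : ∀ i, IdentDistrib (X i) (X 0) μ μ)
    (n : ℕ) :
    variance (∑ i ∈ Finset.range n, X i) μ = (n : ℝ) * variance (X 0) μ := by
  rw [IndepFun.variance_sum (fun i _ => (hident i).memLp_iff.2 hX) fun i _ j _ hij => hindep hij]
  simp [(hident _).variance_eq]

end ProbabilityTheory

theorem lln_log_lower_bound_general {Ω : Type*} [MeasurableSpace Ω] (μ : Measure Ω)
    [IsProbabilityMeasure μ] (X : ℕ → Ω → ℝ)
    (hmeas : ∀ i, Measurable (X i))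
    (hindep : iIndepFun X μ)
    (hident : ∀ i, IdentDistrib (X i) (X 0) μ μ)
    (hL2 : Integrable (fun ω => (X 0 ω) ^ 2) μ)
    (ε : ℝ) (hε : 0 < ε) (hε' : ε < ∫ ω, X 0 ω ∂μ)
    (c : ℝ) (hc : 0 < c) (m : ℕ) (hm : 1 ≤ m) :
    (∫ ω, Real.logb 2 (1 + c * (∑ i ∈ Finset.range m, X i ω) ^ 2) ∂μ) ≥
      Real.logb 2 (1 + c * (m : ℝ) ^ 2 * (∫ ω, X 0 ω ∂μ) ^ 2) -
        ((∫ ω, (X 0 ω) ^ 2 ∂μ) / ((m : ℝ) * ε ^ 2) *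
            Real.logb 2 (1 + c * (m : ℝ) ^ 2 * ((∫ ω, X 0 ω ∂μ) - ε) ^ 2) -
          Real.logb 2
            (1 - c * (m : ℝ) ^ 2 * ε * (2 * (∫ ω, X 0 ω ∂μ) - ε) /
              (1 + c * (m : ℝ) ^ 2 * (∫ ω, X 0 ω ∂μ) ^ 2))) := by
  set μ1 := ∫ ω, X 0 ω ∂μ
  set σ2 := ∫ ω, X 0 ω ^ 2 ∂μ
  set S := ∑ i ∈ Finset.range m, X i
  have hm0 : (0 : ℝ) < m := by exact_mod_cast hm
  have hX0 : MemLp (X 0) 2 μ :=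
    (memLp_two_iff_integrable_sq (hmeas 0).aestronglyMeasurable).2 hL2
  have hS : MemLp S 2 μ := memLp_finsetSum' _ fun i _ => (hident i).memLp_iff.2 hX0
  have hES : μ[S] = m * μ1 :=
    integral_sum_range_of_identDistrib (hX0.integrable one_le_two) hident m
  have hVarS : variance S μ ≤ m * σ2 := by
    rw [variance_sum_range_of_identDistrib hX0 (fun i j hij => hindep.indepFun hij) hident m]
    exact mul_le_mul_of_nonneg_left (variance_le_expectation_sq hX0.1) hm0.le
  have hchebyshev := one_sub_variance_div_sq_mul_logb_le_integral hS one_lt_two hc.le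
    (mul_pos hm0 hε) (by rw [hES]; gcongr)
  rw [hES, show c * (m * μ1 - m * ε) ^ 2 = c * m ^ 2 * (μ1 - ε) ^ 2 by ring] at hchebyshev
  simp only [S, Finset.sum_apply] at hchebyshev
  set L := logb 2 (1 + c * m ^ 2 * (μ1 - ε) ^ 2)
  have hL : 0 ≤ L := logb_nonneg one_lt_two (le_add_of_nonneg_right (by positivity))
  have hvariance_ratio : variance S μ / (m * ε) ^ 2 ≤ σ2 / (m * ε ^ 2) := by
    rw [div_le_div_iff₀ (by positivity) (by positivity)]
    nlinarith
  have hsplit := logb_one_add_mul_sq_add_logb_one_sub 2 (c * m ^ 2) μ1 ε (by positivity)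
  calc _ = (1 - σ2 / (m * ε ^ 2)) * L := by linear_combination hsplit
    _ ≤ (1 - variance S μ / (m * ε) ^ 2) * L := by gcongr
    _ ≤ _ := hchebyshev

/-- Law-of-large-numbers lower bound: for i.i.d. nonnegative `X_i` with finite second
moment, `E[log₂(1 + c S_m²)] ≥ log₂(1 + c m² E[X₁]²) − δ_m`. -/
theorem lln_log_lower_bound {Ω : Type*} [MeasurableSpace Ω] (μ : Measure Ω)
    [IsProbabilityMeasure μ] (X : ℕ → Ω → ℝ)
    (hmeas : ∀ i, Measurable (X i))
    (hnonneg : ∀ i ω, 0 ≤ X i ω)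
    (hindep : iIndepFun X μ)
    (hident : ∀ i, IdentDistrib (X i) (X 0) μ μ)
    (hL2 : Integrable (fun ω => (X 0 ω) ^ 2) μ)
    (ε : ℝ) (hε : 0 < ε) (hε' : ε < ∫ ω, X 0 ω ∂μ)
    (c : ℝ) (hc : 0 < c) (m : ℕ) (hm : 1 ≤ m) :
    (∫ ω, Real.logb 2 (1 + c * (∑ i ∈ Finset.range m, X i ω) ^ 2) ∂μ) ≥
      Real.logb 2 (1 + c * (m : ℝ) ^ 2 * (∫ ω, X 0 ω ∂μ) ^ 2) -
        ((∫ ω, (X 0 ω) ^ 2 ∂μ) / ((m : ℝ) * ε ^ 2) *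
            Real.logb 2 (1 + c * (m : ℝ) ^ 2 * ((∫ ω, X 0 ω ∂μ) - ε) ^ 2) -
          Real.logb 2
            (1 - c * (m : ℝ) ^ 2 * ε * (2 * (∫ ω, X 0 ω ∂μ) - ε) /
              (1 + c * (m : ℝ) ^ 2 * (∫ ω, X 0 ω ∂μ) ^ 2))) :=
  lln_log_lower_bound_general μ X hmeas hindep hident hL2 ε hε hε' c hc m hm
end

section
/- For every P > 0, setting x = 2P²/(1 + 4P + 2P²), one has log₂((1+4P)²/(1 + 4P + 2P²)) − log₂(1 + √(1 − x²)) + 1 ≤ 4. Equivalently, the closed-form gap between the MIMO cut-set bound R_mimo(P) = log₂(1 + 4P + 2P²) + log₂(1 + √(1 − x²)) − 1 and the ergodic interference neutralization rate R_in(P) = 2·log₂(1 + 2P²/(1+4P)) + 2·log₂(1 + √(1 − x²)) − 2 satisfies R_mimo(P) − R_in(P) ≤ 4 for all P > 0. -/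
open Real

/-- For every `P > 0`, with `x = 2P²/(1 + 4P + 2P²)`, the closed-form gap
`R_mimo(P) − R_in(P)` is at most `4` bits/sec/Hz. -/
theorem gap_le_four_uniform_phase (P : ℝ) (hP : 0 < P) :
    Real.logb 2 ((1 + 4 * P) ^ 2 / (1 + 4 * P + 2 * P ^ 2)) -
        Real.logb 2 (1 + Real.sqrt (1 - (2 * P ^ 2 / (1 + 4 * P + 2 * P ^ 2)) ^ 2)) + 1 ≤ 4 := by
  have hD : (0:ℝ) < 1 + 4 * P + 2 * P ^ 2 := by positivity
  have h1 : Real.logb 2 ((1 + 4 * P) ^ 2 / (1 + 4 * P + 2 * P ^ 2)) ≤ 3 := by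
    have hle : (1 + 4 * P) ^ 2 / (1 + 4 * P + 2 * P ^ 2) ≤ 8 := by
      rw [div_le_iff₀ hD]; nlinarith
    calc Real.logb 2 ((1 + 4 * P) ^ 2 / (1 + 4 * P + 2 * P ^ 2)) ≤ Real.logb 2 8 :=
          Real.logb_le_logb_of_le (by norm_num) (by positivity) hle
      _ = 3 := by
          rw [show (8:ℝ) = 2 ^ (3:ℕ) by norm_num]
          simp [Real.logb, Real.log_pow]
          rw [div_eq_iff (Real.log_ne_zero_of_pos_of_ne_one (by norm_num) (by norm_num))]
  have h2 : 0 ≤ Real.logb 2 (1 + Real.sqrt (1 - (2 * P ^ 2 / (1 + 4 * P + 2 * P ^ 2)) ^ 2)) :=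
    Real.logb_nonneg (by norm_num) (by nlinarith [Real.sqrt_nonneg (1 - (2 * P ^ 2 / (1 + 4 * P + 2 * P ^ 2)) ^ 2)])
  linarith
end

section
/- With x(P) = 2P²/(1 + 4P + 2P²), the function D(P) = log₂((1+4P)²/(1 + 4P + 2P²)) − log₂(1 + √(1 − x(P)²)) + 1 converges to 4 as P → ∞. -/
open Real Filter Topology

/-- The closed-form gap `D(P) = R_mimo(P) − R_in(P)` tends to `4` as `P → ∞`. -/
theorem gap_tendsto_four_uniform_phase :
    Filter.Tendsto
      (fun P : ℝ =>
        Real.logb 2 ((1 + 4 * P) ^ 2 / (1 + 4 * P + 2 * P ^ 2)) -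
          Real.logb 2 (1 + Real.sqrt (1 - (2 * P ^ 2 / (1 + 4 * P + 2 * P ^ 2)) ^ 2)) + 1)
      Filter.atTop (nhds 4) := by
  set F : ℝ → ℝ := fun t =>
    Real.logb 2 ((t + 4) ^ 2 / (t ^ 2 + 4 * t + 2)) -
      Real.logb 2 (1 + Real.sqrt (1 - (2 / (t ^ 2 + 4 * t + 2)) ^ 2)) + 1 with hF
  have hF0 : F 0 = 4 := by
    have h1 : ((0:ℝ) + 4) ^ 2 / ((0:ℝ) ^ 2 + 4 * 0 + 2) = 8 := by norm_num
    have h2 : (1 : ℝ) - (2 / ((0:ℝ) ^ 2 + 4 * 0 + 2)) ^ 2 = 0 := by norm_num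
    simp only [hF, h1, h2, Real.sqrt_zero, add_zero, Real.logb_one]
    have : (8 : ℝ) = 2 ^ (3 : ℕ) := by norm_num
    rw [this, Real.logb_pow, Real.logb_self_eq_one (by norm_num)]
    norm_num
  have hcont : ContinuousAt F 0 := by
    have hden : ContinuousAt (fun t : ℝ => t ^ 2 + 4 * t + 2) 0 := by fun_prop
    have hden0 : ((0:ℝ) ^ 2 + 4 * 0 + 2) = 2 := by norm_num
    have h1 : ContinuousAt (fun t : ℝ => (t + 4) ^ 2 / (t ^ 2 + 4 * t + 2)) 0 := by
      apply ContinuousAt.div (by fun_prop) hden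
      norm_num
    have h1' : ContinuousAt (fun t : ℝ =>
        Real.logb 2 ((t + 4) ^ 2 / (t ^ 2 + 4 * t + 2))) 0 := by
      apply (Real.continuousAt_logb (by norm_num)).comp h1
    have h2 : ContinuousAt (fun t : ℝ =>
        1 + Real.sqrt (1 - (2 / (t ^ 2 + 4 * t + 2)) ^ 2)) 0 := by
      apply ContinuousAt.add continuousAt_const
      apply Real.continuous_sqrt.continuousAt.comp
      apply ContinuousAt.sub continuousAt_const
      apply ContinuousAt.pow
      exact ContinuousAt.div continuousAt_const hden (by norm_num)
    have h2' : ContinuousAt (fun t : ℝ =>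
        Real.logb 2 (1 + Real.sqrt (1 - (2 / (t ^ 2 + 4 * t + 2)) ^ 2))) 0 := by
      apply (Real.continuousAt_logb ?_).comp h2
      norm_num
    exact ((h1'.sub h2').add continuousAt_const)
  have hlim : Filter.Tendsto (fun P : ℝ => F P⁻¹) Filter.atTop (nhds 4) := by
    rw [← hF0]
    exact hcont.tendsto.comp tendsto_inv_atTop_zero
  refine hlim.congr' ?_
  filter_upwards [eventually_gt_atTop (0:ℝ)] with P hP
  have hP' : P ≠ 0 := ne_of_gt hP
  have hd : (1 + 4 * P + 2 * P ^ 2) ≠ 0 := by positivity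
  have hd' : (P⁻¹ ^ 2 + 4 * P⁻¹ + 2) ≠ 0 := by positivity
  have e1 : (P⁻¹ + 4) ^ 2 / (P⁻¹ ^ 2 + 4 * P⁻¹ + 2)
      = (1 + 4 * P) ^ 2 / (1 + 4 * P + 2 * P ^ 2) := by
    field_simp
  have e2 : (2 : ℝ) / (P⁻¹ ^ 2 + 4 * P⁻¹ + 2)
      = 2 * P ^ 2 / (1 + 4 * P + 2 * P ^ 2) := by
    field_simp
  simp only [hF, e1, e2]
end

section
/- For every P > 0, setting x = 2P²/(1 + 4P + 2P²), one has (1/(2π))·∫₀^{2π} log₂(1 + 2P²·(1 − cos θ)/(1 + 4P)) dθ = log₂(1 + 2P²/(1+4P)) + log₂(1 + √(1 − x²)) − 1. -/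
open MeasureTheory Real

open intervalIntegral

open MeasureTheory Real intervalIntegral

noncomputable def Fint (r : ℝ) : ℝ :=
  ∫ θ in (0:ℝ)..(2*π), Real.log (1 + r^2 - 2*r*Real.cos θ)

lemma arg_lb (r θ : ℝ) : (1 - |r|)^2 ≤ 1 + r^2 - 2*r*Real.cos θ := by
  have h1 : r * Real.cos θ ≤ |r| :=
    le_trans (le_abs_self _)
      (by rw [abs_mul]; exact mul_le_of_le_one_right (abs_nonneg r) (Real.abs_cos_le_one θ))
  nlinarith [sq_abs r]

lemma arg_ub (r θ : ℝ) : 1 + r^2 - 2*r*Real.cos θ ≤ (1 + |r|)^2 := by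
  have h1 : -(r * Real.cos θ) ≤ |r| :=
    le_trans (neg_le_abs _)
      (by rw [abs_mul]; exact mul_le_of_le_one_right (abs_nonneg r) (Real.abs_cos_le_one θ))
  nlinarith [sq_abs r]

lemma arg_pos {r : ℝ} (hr : |r| < 1) (θ : ℝ) : 0 < 1 + r^2 - 2*r*Real.cos θ := by
  have h : 0 < (1 - |r|)^2 := by nlinarith
  exact lt_of_lt_of_le h (arg_lb r θ)

lemma cont_log {r : ℝ} (hr : |r| < 1) :
    Continuous fun θ => Real.log (1 + r^2 - 2*r*Real.cos θ) := by
  apply Continuous.log (by continuity)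
  exact fun θ => (arg_pos hr θ).ne'

lemma intble {r : ℝ} (hr : |r| < 1) (a b : ℝ) :
    IntervalIntegrable (fun θ => Real.log (1 + r^2 - 2*r*Real.cos θ)) volume a b :=
  (cont_log hr).intervalIntegrable a b

lemma periodic_log (r : ℝ) :
    Function.Periodic (fun θ => Real.log (1 + r^2 - 2*r*Real.cos θ)) (2*π) := by
  intro x; simp [Real.cos_add_two_pi]

lemma Fint_neg (r : ℝ) : Fint (-r) = Fint r := by
  have hper := periodic_log r
  have h1 : Fint (-r) = ∫ θ in (0:ℝ)..(2*π),
      Real.log (1 + r^2 - 2*r*Real.cos (θ + π)) := by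
    unfold Fint
    apply intervalIntegral.integral_congr
    intro θ _
    dsimp only
    rw [Real.cos_add_pi]
    ring_nf
  rw [h1]
  rw [intervalIntegral.integral_comp_add_right
    (fun θ => Real.log (1 + r^2 - 2*r*Real.cos θ)) π]
  have h2 := hper.intervalIntegral_add_eq π 0
  simp only [zero_add] at h2
  rw [show (0:ℝ) + π = π by ring, show (2:ℝ)*π + π = π + 2*π by ring]
  exact h2

lemma Fint_double {r : ℝ} (hr : |r| < 1) : Fint (r^2) = 2 * Fint r := by
  have hr2 : |r^2| < 1 := by
    rw [abs_pow]; exact pow_lt_one₀ (abs_nonneg r) hr (by norm_num)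
  have hrn : |(-r)| < 1 := by rwa [abs_neg]
  have hsum : Fint r + Fint (-r) =
      ∫ θ in (0:ℝ)..(2*π), Real.log (1 + (r^2)^2 - 2*(r^2)*Real.cos (2*θ)) := by
    unfold Fint
    rw [← intervalIntegral.integral_add (intble hr 0 (2*π)) (intble hrn 0 (2*π))]
    apply intervalIntegral.integral_congr
    intro θ _
    have h1 := arg_pos hr θ
    have h2 := arg_pos hrn θ
    dsimp only
    rw [← Real.log_mul h1.ne' h2.ne']
    congr 1
    nlinarith [Real.cos_two_mul θ]
  have h2 : (∫ θ in (0:ℝ)..(2*π), Real.log (1 + (r^2)^2 - 2*(r^2)*Real.cos (2*θ)))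
      = (2:ℝ)⁻¹ • ∫ θ in (2*0:ℝ)..(2*(2*π)), Real.log (1 + (r^2)^2 - 2*(r^2)*Real.cos θ) :=
    intervalIntegral.integral_comp_mul_left (c := 2)
      (fun θ => Real.log (1 + (r^2)^2 - 2*(r^2)*Real.cos θ)) (by norm_num)
  have h4 := (periodic_log (r^2)).intervalIntegral_add_zsmul_eq 2 0 (intble hr2)
  simp only [zero_add, zsmul_eq_mul] at h4
  push_cast at h4
  rw [Fint_neg r] at hsum
  rw [h2, show (2:ℝ)*0 = 0 by ring, h4] at hsum
  rw [smul_eq_mul] at hsum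
  unfold Fint at hsum ⊢
  linarith [hsum]

lemma Fint_zero {r : ℝ} (hr : |r| < 1) : Fint r = 0 := by
  have key : ∀ n : ℕ, Fint r = Fint (r^(2^n)) / 2^n := by
    intro n
    induction n with
    | zero => simp
    | succ n ih =>
      have h1 : |r ^ 2 ^ n| < 1 := by
        rw [abs_pow]
        exact pow_lt_one₀ (abs_nonneg r) hr (Nat.two_pow_pos n).ne'
      have h2 : r ^ 2 ^ (n+1) = (r ^ 2 ^ n)^2 := by rw [← pow_mul, pow_succ]
      rw [ih, h2, Fint_double h1]
      field_simp
      ring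
  set C : ℝ := Real.log 4 - 2 * Real.log (1 - |r|) with hC
  have hC0 : 0 ≤ Real.log 4 := Real.log_nonneg (by norm_num)
  have h1r : 0 < 1 - |r| := by linarith
  have hlog1r : Real.log (1 - |r|) ≤ 0 :=
    Real.log_nonpos (by linarith) (by linarith [abs_nonneg r])
  have hCpos : 0 ≤ C := by rw [hC]; linarith
  have hbound : ∀ s : ℝ, |s| ≤ |r| → |Fint s| ≤ C * (2*π) := by
    intro s hs
    have hs1 : |s| < 1 := lt_of_le_of_lt hs hr
    have hpt : ∀ θ ∈ Set.uIoc (0:ℝ) (2*π), ‖Real.log (1 + s^2 - 2*s*Real.cos θ)‖ ≤ C := by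
      intro θ _
      rw [Real.norm_eq_abs, abs_le]
      have hlb := arg_lb s θ
      have hub := arg_ub s θ
      have hpos := arg_pos hs1 θ
      have h1s : 0 < 1 - |s| := by linarith
      constructor
      · have hm1 : Real.log ((1-|s|)^2) ≤ Real.log (1 + s^2 - 2*s*Real.cos θ) :=
          Real.log_le_log (by positivity) hlb
        have hm2 : Real.log ((1-|s|)^2) = 2 * Real.log (1-|s|) := by
          rw [Real.log_pow]; push_cast; ring
        have hm3 : Real.log (1-|r|) ≤ Real.log (1-|s|) := Real.log_le_log h1r (by linarith)
        rw [hC]; linarith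
      · have hle4 : 1 + s^2 - 2*s*Real.cos θ ≤ 4 := by nlinarith [abs_nonneg s]
        have hm4 : Real.log (1 + s^2 - 2*s*Real.cos θ) ≤ Real.log 4 :=
          Real.log_le_log hpos hle4
        rw [hC]; linarith
    have h5 := intervalIntegral.norm_integral_le_of_norm_le_const (C := C) hpt
    rw [Real.norm_eq_abs] at h5
    calc |Fint s| ≤ C * |2*π - 0| := h5
    _ = C * (2*π) := by rw [sub_zero, abs_of_pos (by positivity)]
  have habs : ∀ n : ℕ, |Fint r| ≤ (C*(2*π)) / 2^n := by
    intro n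
    have hsn : |r ^ 2 ^ n| ≤ |r| := by
      rw [abs_pow]
      exact pow_le_of_le_one (abs_nonneg r) hr.le (Nat.two_pow_pos n).ne'
    rw [key n, abs_div, abs_pow, abs_two]
    gcongr
    exact hbound _ hsn
  have htend : Filter.Tendsto (fun n : ℕ => (C*(2*π)) / 2^n) Filter.atTop (nhds 0) := by
    have h6 : Filter.Tendsto (fun n : ℕ => ((1:ℝ)/2)^n) Filter.atTop (nhds 0) :=
      tendsto_pow_atTop_nhds_zero_of_lt_one (by norm_num) (by norm_num)
    have h7 := h6.const_mul (C*(2*π))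
    rw [mul_zero] at h7
    convert h7 using 2 with n
    rw [div_pow, one_pow, div_eq_mul_inv, div_eq_mul_inv, mul_comm]
    ring
  have h8 : |Fint r| ≤ 0 := ge_of_tendsto' htend habs
  have := abs_nonneg (Fint r)
  rw [← abs_eq_zero]
  linarith


/-- Closed form of the per-user rate of ergodic interference neutralization for the
`2`-user `2`-hop network with `2` relays under i.i.d. uniform phase fading. -/
theorem rate_closed_form_uniform_phase (P : ℝ) (hP : 0 < P) :
    (1 / (2 * π)) *
        (∫ θ in (0:ℝ)..(2 * π),
          Real.logb 2 (1 + 2 * P ^ 2 * (1 - Real.cos θ) / (1 + 4 * P))) =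
      Real.logb 2 (1 + 2 * P ^ 2 / (1 + 4 * P)) +
        Real.logb 2 (1 + Real.sqrt (1 - (2 * P ^ 2 / (1 + 4 * P + 2 * P ^ 2)) ^ 2)) - 1 := by
  have hπ := Real.pi_pos
  have hden : (0:ℝ) < 1 + 4*P := by linarith
  set c : ℝ := 2 * P^2 / (1 + 4*P) with hc
  have hc0 : 0 < c := by rw [hc]; positivity
  set s : ℝ := Real.sqrt (1 + 2*c) with hs
  have hs2 : s^2 = 1 + 2*c := Real.sq_sqrt (by linarith)
  have hs0 : 0 < s := Real.sqrt_pos.mpr (by linarith)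
  have hs1 : 1 < s := by nlinarith
  have hslt : s < 1 + c := by nlinarith
  set r : ℝ := (1 + c - s) / c with hrdef
  have hr0 : 0 < r := div_pos (by linarith) hc0
  have hr1 : r < 1 := by rw [hrdef, div_lt_one hc0]; linarith
  have hrabs : |r| < 1 := by rw [abs_of_pos hr0]; exact hr1
  set A : ℝ := (1 + c + s) / 2 with hA
  have hA0 : 0 < A := by rw [hA]; linarith
  have hAr : 2 * A * r = c := by
    rw [hA, hrdef]; field_simp; nlinarith
  have hA1 : A * (1 + r^2) = 1 + c := by
    rw [hA, hrdef]; field_simp; nlinarith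
  have hlog2 : (0:ℝ) < Real.log 2 := Real.log_pos (by norm_num)
  -- pointwise identity
  have hpoint : ∀ θ : ℝ, 1 + 2*P^2*(1 - Real.cos θ)/(1+4*P)
      = A * (1 + r^2 - 2*r*Real.cos θ) := by
    intro θ
    have h1 : 1 + 2*P^2*(1 - Real.cos θ)/(1+4*P) = 1 + c*(1 - Real.cos θ) := by
      rw [hc]; ring
    have h2 : A * (1 + r^2 - 2*r*Real.cos θ)
        = A*(1+r^2) - (2*A*r)*Real.cos θ := by ring
    rw [h1, h2, hA1, hAr]; ring
  -- rewrite the integral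
  have hInt : (∫ θ in (0:ℝ)..(2*π),
      Real.logb 2 (1 + 2*P^2*(1 - Real.cos θ)/(1+4*P)))
      = (∫ θ in (0:ℝ)..(2*π),
        (Real.log A + Real.log (1 + r^2 - 2*r*Real.cos θ)) / Real.log 2) := by
    apply intervalIntegral.integral_congr
    intro θ _
    dsimp only
    rw [Real.logb, hpoint θ, Real.log_mul hA0.ne' (arg_pos hrabs θ).ne']
  rw [hInt, intervalIntegral.integral_div,
    intervalIntegral.integral_add (intervalIntegrable_const) (intble hrabs 0 (2*π)),
    intervalIntegral.integral_const]
  have hF : (∫ θ in (0:ℝ)..(2*π), Real.log (1 + r^2 - 2*r*Real.cos θ)) = 0 :=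
    Fint_zero hrabs
  rw [hF]
  -- RHS algebra
  have hx : 2*P^2/(1+4*P+2*P^2) = c/(1+c) := by
    have h2 : (0:ℝ) < 1+4*P+2*P^2 := by positivity
    have h3 : (0:ℝ) < 1 + c := by linarith
    rw [div_eq_div_iff h2.ne' h3.ne', hc]
    field_simp
  have hsqrt : Real.sqrt (1 - (c/(1+c))^2) = s/(1+c) := by
    rw [show 1 - (c/(1+c))^2 = (s/(1+c))^2 by field_simp; nlinarith [hs2]]
    exact Real.sqrt_sq (by positivity)
  have hAeq : A = (1+c) * (1 + s/(1+c)) / 2 := by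
    rw [hA]; field_simp
  have hlogA : Real.log A = Real.log (1+c) + Real.log (1 + s/(1+c)) - Real.log 2 := by
    rw [hAeq, Real.log_div (by positivity) (by norm_num),
      Real.log_mul (by positivity) (by positivity)]
  rw [hx, hsqrt]
  rw [Real.logb, Real.logb, hlogA]
  rw [smul_eq_mul, add_zero, sub_zero]
  field_simp
end

section
/- For all positive reals a, b, g, and P > 0, log₂(1 + max{1, b/g}·(g + a)·P) − (1/2)·log₂(1 + 2·a·P) − (1/2)·log₂(1 + 2·b·P) ≤ log₂(3/2) + (1/2)·|log₂(b/g)| + (1/2)·|log₂(a/g)|. -/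
/-!
Write `s = b / g`, `t = a / g`, `q = g P`, `M = max 1 s`, `N = max 1 t`. Since
`|log s| = 2 log M - log s`, the claim follows (even without the `log₂ (3/2)`) from
`√(st) (1 + M q (1 + t)) ≤ M N (1 + 2 q √(st))`, which holds termwise because `√(st) ≤ M N` and
`1 + t ≤ 2 N`, combined with the Cauchy–Schwarz bound `(1 + 2 q √(st))² ≤ (1 + 2 t q) (1 + 2 s q)`.
-/

open Real

lemma one_add_mul_sqrt_mul_sq_le {c x y : ℝ} (hc : 0 ≤ c) (hx : 0 ≤ x) (hy : 0 ≤ y) :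
    (1 + c * √(x * y)) ^ 2 ≤ (1 + c * x) * (1 + c * y) := by
  have hxy : 2 * √(x * y) ≤ x + y := by
    rw [sqrt_mul hx]
    nlinarith [sq_nonneg (√x - √y), sq_sqrt hx, sq_sqrt hy]
  calc (1 + c * √(x * y)) ^ 2 = 1 + c * (2 * √(x * y)) + c ^ 2 * √(x * y) ^ 2 := by ring
    _ ≤ 1 + c * (x + y) + c ^ 2 * (x * y) := by rw [sq_sqrt (mul_nonneg hx hy)]; gcongr
    _ = (1 + c * x) * (1 + c * y) := by ring

lemma abs_logb_eq_two_mul_logb_max_sub {c x : ℝ} (hc : 1 < c) (hx : 0 < x) :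
    |logb c x| = 2 * logb c (max 1 x) - logb c x := by
  rcases le_total x 1 with hx1 | hx1
  · rw [max_eq_left hx1, logb_one, abs_of_nonpos (logb_nonpos hc hx.le hx1)]
    ring
  · rw [max_eq_right hx1, abs_of_nonneg (logb_nonneg hc hx1)]
    ring

lemma mul_sq_one_add_max_mul_le {s t q : ℝ} (hs : 0 ≤ s) (ht : 0 ≤ t) (hq : 0 ≤ q) :
    s * t * (1 + max 1 s * (q * (1 + t))) ^ 2 ≤
      (max 1 s * max 1 t) ^ 2 * ((1 + 2 * (t * q)) * (1 + 2 * (s * q))) := by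
  set M := max 1 s
  set N := max 1 t
  have hM : 1 ≤ M := le_max_left 1 s
  have hN : 1 ≤ N := le_max_left 1 t
  have hu : √(s * t) ≤ M * N := by
    rw [sqrt_le_left (by positivity)]
    nlinarith [le_max_right 1 s, le_max_right 1 t, mul_le_mul hM hN zero_le_one (by linarith)]
  have htN : 1 + t ≤ 2 * N := by linarith [le_max_right 1 t]
  have hlin : √(s * t) * (1 + M * (q * (1 + t))) ≤ M * N * (1 + 2 * q * √(s * t)) := by
    have := mul_le_mul_of_nonneg_left htN (by positivity : 0 ≤ √(s * t) * M * q)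
    nlinarith
  calc s * t * (1 + M * (q * (1 + t))) ^ 2
      = (√(s * t) * (1 + M * (q * (1 + t)))) ^ 2 := by
        rw [mul_pow, sq_sqrt (mul_nonneg hs ht)]
    _ ≤ (M * N * (1 + 2 * q * √(s * t))) ^ 2 :=
        pow_le_pow_left₀ (by positivity) hlin 2
    _ = (M * N) ^ 2 * (1 + 2 * q * √(t * s)) ^ 2 := by rw [mul_pow, mul_comm s]
    _ ≤ (M * N) ^ 2 * ((1 + 2 * (t * q)) * (1 + 2 * (s * q))) := by
        gcongr
        exact (one_add_mul_sqrt_mul_sq_le (by positivity : 0 ≤ 2 * q) ht hs).trans_eq (by ring)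

lemma logb_one_add_max_mul_sub_le {c s t q : ℝ} (hc : 1 < c) (hs : 0 < s) (ht : 0 < t)
    (hq : 0 ≤ q) :
    logb c (1 + max 1 s * (q * (1 + t))) - 1 / 2 * logb c (1 + 2 * (t * q)) -
        1 / 2 * logb c (1 + 2 * (s * q)) ≤
      1 / 2 * |logb c s| + 1 / 2 * |logb c t| := by
  have hM : 0 < max 1 s := lt_max_of_lt_left one_pos
  have hN : 0 < max 1 t := lt_max_of_lt_left one_pos
  have key := logb_le_logb_of_le hc (by positivity) (mul_sq_one_add_max_mul_le hs.le ht.le hq)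
  rw [logb_mul (by positivity) (by positivity), logb_mul hs.ne' ht.ne', logb_pow,
    logb_mul (by positivity) (by positivity), logb_pow, logb_mul hM.ne' hN.ne',
    logb_mul (by positivity) (by positivity)] at key
  rw [abs_logb_eq_two_mul_logb_max_sub hc hs, abs_logb_eq_two_mul_logb_max_sub hc ht]
  push_cast at key
  linarith

/-- Per-pair gap bound for ergodic interference alignment on the fading interference
channel: uniform in `P`. -/
theorem eia_per_pair_gap (a b g P : ℝ) (ha : 0 < a) (hb : 0 < b) (hg : 0 < g)
    (hP : 0 < P) :
    Real.logb 2 (1 + max 1 (b / g) * (g + a) * P) -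
        (1 / 2) * Real.logb 2 (1 + 2 * a * P) - (1 / 2) * Real.logb 2 (1 + 2 * b * P) ≤
      Real.logb 2 (3 / 2) + (1 / 2) * |Real.logb 2 (b / g)| +
        (1 / 2) * |Real.logb 2 (a / g)| := by
  have gap := logb_one_add_max_mul_sub_le one_lt_two (div_pos hb hg) (div_pos ha hg)
    (mul_pos hg hP).le
  have hgP : (g + a) * P = g * P * (1 + a / g) := by field_simp
  have haP : a * P = a / g * (g * P) := by field_simp
  have hbP : b * P = b / g * (g * P) := by field_simp
  rw [mul_assoc _ (g + a), hgP, mul_assoc 2 a, mul_assoc 2 b, haP, hbP]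
  have hslack : 0 ≤ logb 2 (3 / 2) := logb_nonneg one_lt_two (by norm_num)
  linarith
end

section
/- Let P, A, B₁, B₂, S be positive reals with B₁·B₂ ≥ A and B₁ + B₂ ≥ S. Then log₂(1 + P·S + P²·A) − log₂(1 + P·A/B₁) − log₂(1 + P·A/B₂) ≤ log₂(B₁·B₂/A). -/
open Real

/-- If `B₁B₂ ≥ A` and `B₁ + B₂ ≥ S`, then
`log₂(1 + PS + P²A) − log₂(1 + PA/B₁) − log₂(1 + PA/B₂) ≤ log₂(B₁B₂/A)`. -/
theorem delta_gap_bound (P A B1 B2 S : ℝ) (hP : 0 < P) (hA : 0 < A) (hB1 : 0 < B1)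
    (hB2 : 0 < B2) (hS : 0 < S) (h1 : A ≤ B1 * B2) (h2 : S ≤ B1 + B2) :
    Real.logb 2 (1 + P * S + P ^ 2 * A) - Real.logb 2 (1 + P * A / B1) -
        Real.logb 2 (1 + P * A / B2) ≤ Real.logb 2 (B1 * B2 / A) := by
  have hy : (0:ℝ) < 1 + P * A / B1 := by positivity
  have hz : (0:ℝ) < 1 + P * A / B2 := by positivity
  have hw : (0:ℝ) < B1 * B2 / A := by positivity
  rw [sub_sub, sub_le_iff_le_add, ← Real.logb_mul hy.ne' hz.ne', ← Real.logb_mul hw.ne' (by positivity)]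
  rw [Real.logb_le_logb one_lt_two (by positivity)]
  have key : 1 + P * S + P ^ 2 * A ≤ B1 * B2 / A * ((1 + P * A / B1) * (1 + P * A / B2)) := by
    rw [div_mul_eq_mul_div, le_div_iff₀ hA]
    field_simp
    ring_nf
    nlinarith [mul_le_mul_of_nonneg_left h2 (by positivity : (0:ℝ) ≤ P * A * B1 * B2),
      mul_le_mul_of_nonneg_left h1 (by positivity : (0:ℝ) ≤ B1 * B2),
      mul_pos hB1 hB2, sq_nonneg P, mul_pos (mul_pos hP hP) hA]
  linarith
  positivity
end
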